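/- For every finite simple graph G, there exist a finite simple graph H, an injective map τ : V(H) → ℝ, and a 3-list-assignment L of H such that (H,L) is a realization of G and the ordered graph (H,τ) is M_4-free. -/

import Mathlib

/-!
Number the vertices of `G` as wires `0, …, n - 1` and run them through a network of adjacent
transpositions (bubble sort) in which any two wires are neighbours at some time. `H` is a grid:
column `2t` has one vertex per position at time `t`, consecutive positions being joined when
their wires are adjacent in `G`; in column `2t + 1` each position `r` gets two adjacent vertices
forming two triangles with position `r` at time `t + 1` and the position it came from at time
`t`. In a 3-colouring a wire therefore keeps its colour through the network, so every colouring
of `H` restricts to one of `G`, and conversely every colouring of `G` extends.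

Ordered column by column, every edge of `H` joins consecutive rows of a column or two consecutive
columns, and the only crossing edges (those of a transposition) have chords. An induced `M₄` would
need its edges `v₁v₅` and `v₂v₄` to cross without chords.
-/

/-- `(H, τ)` contains no induced ordered copy of the ordered pattern graph `P`
on vertices `0 < 1 < ⋯ < m - 1`. -/
def PatternFree {W : Type*} {m : ℕ} (H : SimpleGraph W) (τ : W → ℝ)
    (P : SimpleGraph (Fin m)) : Prop :=
  ¬ ∃ x : Fin m → W,
      (∀ i j : Fin m, i < j → τ (x i) < τ (x j)) ∧
      ∀ i j : Fin m, H.Adj (x i) (x j) ↔ P.Adj i j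

/-- The ordered graph `M₄`: six vertices `v₁ < ⋯ < v₆` with exactly the edges
`v₁v₅`, `v₂v₄`, `v₃v₆`. -/
def M4 : SimpleGraph (Fin 6) :=
  SimpleGraph.fromEdgeSet {s(0, 4), s(1, 3), s(2, 5)}

theorem patternFree_M4_of_layers {V : Type*} (H : SimpleGraph V) (τ : V → ℝ) (col row : V → ℕ)
    (hτ : ∀ v w, τ v < τ w → col v < col w ∨ col v = col w ∧ row v < row w)
    (hcol : ∀ v w, H.Adj v w → col w ≤ col v + 1)
    (hrow : ∀ v w, H.Adj v w → col v = col w → row w = row v + 1 ∨ row v = row w + 1)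
    (hcross : ∀ a b c d, H.Adj a d → H.Adj b c → col a = col b → col c = col a + 1 →
      col d = col c → row a < row b → row c < row d →
      H.Adj a c ∨ H.Adj b d ∨ H.Adj a b ∨ H.Adj c d) :
    PatternFree H τ M4 := by
  rintro ⟨x, hx, hadj⟩
  have hlt (i j : Fin 6) (hij : i < j := by decide) := hτ _ _ (hx i j hij)
  have h04 : H.Adj (x 0) (x 4) := (hadj 0 4).2 (by simp [M4])
  have h13 : H.Adj (x 1) (x 3) := (hadj 1 3).2 (by simp [M4])
  have := hlt 0 1; have := hlt 1 2; have := hlt 2 3; have := hlt 3 4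
  have := hcol _ _ h04; have := hcol _ _ h13
  have := hrow _ _ h04; have := hrow _ _ h13
  -- Five lex-increasing vertices cannot all lie in one column without a row gap of 4, and
  -- `x 1, x 2, x 3` not without a gap of 2: so both edges join consecutive columns and cross.
  rcases hcross _ _ _ _ h04 h13 (by omega) (by omega) (by omega) (by omega) (by omega)
    with h | h | h | h
  exacts [absurd ((hadj 0 3).1 h) (by simp [M4]), absurd ((hadj 1 4).1 h) (by simp [M4]),
    absurd ((hadj 0 1).1 h) (by simp [M4]), absurd ((hadj 3 4).1 h) (by simp [M4])]

lemma div_mod_of_add_mul {R i x : ℕ} (hx : x < R) : (x + R * i) / R = i ∧ (x + R * i) % R = x := by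
  have hR : 0 < R := by omega
  rw [Nat.add_mul_div_left _ _ hR, Nat.div_eq_of_lt hx, Nat.add_mul_mod_self_left,
    Nat.mod_eq_of_lt hx, zero_add]
  exact ⟨rfl, rfl⟩

lemma lex_lt_of_add_mul_lt {R i j x y : ℕ} (hx : x < R) (hy : y < R)
    (h : x + R * i < y + R * j) : i < j ∨ i = j ∧ x < y := by
  have hij : i ≤ j := by
    simpa only [(div_mod_of_add_mul hx).1, (div_mod_of_add_mul hy).1] using
      Nat.div_le_div_right (c := R) h.le
  rcases hij.lt_or_eq with hij | rfl
  · exact Or.inl hij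
  · exact Or.inr ⟨rfl, by omega⟩

lemma eq_of_add_mul_eq {R i j x y : ℕ} (hx : x < R) (hy : y < R)
    (h : x + R * i = y + R * j) : i = j ∧ x = y := by
  obtain ⟨hi, hx'⟩ := div_mod_of_add_mul (i := i) hx
  obtain ⟨hj, hy'⟩ := div_mod_of_add_mul (i := j) hy
  rw [h] at hi hx'
  exact ⟨hi.symm.trans hj, hx'.symm.trans hy'⟩

namespace SwapGadget

/-- Position `q` before the transposition of `p, p + 1` is joined to row `x` of the next diamond
column. Rows `2r, 2r + 1` hang from the position that moves to `r`; the chords to rows `2p` and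
`2p + 3`, with the extra rung `2p + 1, 2p + 2`, cut the crossing of the two moving diamonds. -/
def InEdge (p q x : ℕ) : Prop :=
  x / 2 = Equiv.swap p (p + 1) q ∨ (q = p ∧ x = 2 * p) ∨ (q = p + 1 ∧ x = 2 * p + 3)

def IsRung (p x : ℕ) : Prop := x % 2 = 0 ∨ x = 2 * p + 1

/-- For `a ≠ b`, `-(a + b)` is the third colour. -/
def windowColor (a b : Fin 3) : Fin 4 → Fin 3 :=
  if a = b then ![a + 1, a + 2, a + 1, a + 2] else ![-(a + b), a, b, -(a + b)]

lemma windowColor_ne_left : ∀ (a b : Fin 3) (k : Fin 4), k ≠ 1 → windowColor a b k ≠ a := by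
  decide

lemma windowColor_ne_right : ∀ (a b : Fin 3) (k : Fin 4), k ≠ 2 → windowColor a b k ≠ b := by
  decide

lemma windowColor_succ_ne :
    ∀ (a b : Fin 3) (k : Fin 4), k ≠ 3 → windowColor a b k ≠ windowColor a b (k + 1) := by
  decide

lemma fin_three_add_ne : ∀ a : Fin 3, a + 1 ≠ a ∧ a + 2 ≠ a ∧ a + 1 ≠ a + 2 := by decide

/-- Colouring of the diamond column of the transposition `p, p + 1` when position `q` has colour
`u q` before it. -/
def rowColor (p : ℕ) (u : ℕ → Fin 3) (x : ℕ) : Fin 3 :=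
  if h : 2 * p ≤ x ∧ x < 2 * p + 4 then windowColor (u p) (u (p + 1)) ⟨x - 2 * p, by omega⟩
  else if x % 2 = 0 then u (x / 2) + 1 else u (x / 2) + 2

section rowColor

variable {p : ℕ} {u : ℕ → Fin 3}

lemma window_or_ne (p x : ℕ) : (∃ k : Fin 4, x = 2 * p + k) ∨ (x / 2 ≠ p ∧ x / 2 ≠ p + 1) := by
  by_cases h : 2 * p ≤ x ∧ x < 2 * p + 4
  · exact Or.inl ⟨⟨x - 2 * p, by omega⟩, by simp only; omega⟩
  · right; omega

lemma rowColor_window (k : Fin 4) :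
    rowColor p u (2 * p + k) = windowColor (u p) (u (p + 1)) k := by
  rw [rowColor, dif_pos (by omega)]
  congr 1; ext; simp

lemma rowColor_of_ne {x : ℕ} (h₁ : x / 2 ≠ p) (h₂ : x / 2 ≠ p + 1) :
    rowColor p u x = if x % 2 = 0 then u (x / 2) + 1 else u (x / 2) + 2 :=
  dif_neg (by omega)

lemma inEdge_window {q : ℕ} {k : Fin 4} (h : InEdge p q (2 * p + k)) :
    (q = p ∧ k ≠ 1) ∨ (q = p + 1 ∧ k ≠ 2) := by
  have := k.isLt
  simp only [InEdge, Equiv.swap_apply_def] at h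
  split_ifs at h <;> omega

lemma rowColor_ne_of_inEdge {q x : ℕ} (h : InEdge p q x) : rowColor p u x ≠ u q := by
  rcases window_or_ne p x with ⟨k, rfl⟩ | ⟨h₁, h₂⟩
  · rw [rowColor_window]
    rcases inEdge_window h with ⟨rfl, hk⟩ | ⟨rfl, hk⟩
    · exact windowColor_ne_left _ _ k hk
    · exact windowColor_ne_right _ _ k hk
  · have hq : q = x / 2 := by
      rcases h with h | ⟨rfl, rfl⟩ | ⟨rfl, rfl⟩
      · rw [← Equiv.swap_apply_self p (p + 1) q, ← h, Equiv.swap_apply_of_ne_of_ne h₁ h₂]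
      all_goals omega
    rw [rowColor_of_ne h₁ h₂, hq]
    have := fin_three_add_ne (u (x / 2))
    split_ifs <;> tauto

lemma rowColor_ne_out (x : ℕ) : rowColor p u x ≠ u (Equiv.swap p (p + 1) (x / 2)) := by
  rcases window_or_ne p x with ⟨k, rfl⟩ | ⟨h₁, h₂⟩
  · rw [rowColor_window]
    by_cases hk : (k : ℕ) < 2
    · rw [show (2 * p + k) / 2 = p by omega, Equiv.swap_apply_left]
      exact windowColor_ne_right _ _ k (by omega)
    · rw [show (2 * p + k) / 2 = p + 1 by omega, Equiv.swap_apply_right]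
      exact windowColor_ne_left _ _ k (by omega)
  · rw [rowColor_of_ne h₁ h₂, Equiv.swap_apply_of_ne_of_ne h₁ h₂]
    have := fin_three_add_ne (u (x / 2))
    split_ifs <;> tauto

lemma rowColor_ne_of_isRung {x : ℕ} (h : IsRung p x) : rowColor p u x ≠ rowColor p u (x + 1) := by
  rcases window_or_ne p x with ⟨k, rfl⟩ | ⟨h₁, h₂⟩
  · have hk : k ≠ 3 := by rintro rfl; rcases h with h | h <;> omega
    have hk' : ((k + 1 : Fin 4) : ℕ) = k + 1 := by omega
    rw [rowColor_window, add_assoc, ← hk', rowColor_window]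
    exact windowColor_succ_ne _ _ k hk
  · have hx : x % 2 = 0 := by rcases h with h | h <;> omega
    have hx' : (x + 1) / 2 = x / 2 := by omega
    rw [rowColor_of_ne h₁ h₂, rowColor_of_ne (hx' ▸ h₁) (hx' ▸ h₂), hx', if_pos hx,
      if_neg (by omega)]
    exact (fin_three_add_ne _).2.2

end rowColor

lemma inEdge_cross {p q₁ q₂ x₁ x₂ : ℕ} (h₁ : InEdge p q₁ x₂) (h₂ : InEdge p q₂ x₁)
    (hq : q₁ < q₂) (hx : x₁ < x₂) :
    InEdge p q₁ x₁ ∨ InEdge p q₂ x₂ ∨ (x₂ = x₁ + 1 ∧ IsRung p x₁) := by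
  simp only [InEdge, IsRung, Equiv.swap_apply_def] at *
  split_ifs at * <;> omega

/-- The wire at position `q` after the transpositions `σ 0, …, σ (t - 1)`, where `σ s = p` swaps
positions `p` and `p + 1`. -/
def wireAt (σ : ℕ → ℕ) : ℕ → ℕ → ℕ
  | 0, q => q
  | t + 1, q => wireAt σ t (Equiv.swap (σ t) (σ t + 1) q)

/-- `(2t, q)` is position `q` at time `t` and `(2t + 1, x)` is row `x` of the diamond column
between times `t` and `t + 1`. -/
inductive Edge (σ : ℕ → ℕ) (G : SimpleGraph ℕ) : ℕ × ℕ → ℕ × ℕ → Prop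
  | wire {t q : ℕ} : G.Adj (wireAt σ t q) (wireAt σ t (q + 1)) → Edge σ G (2 * t, q) (2 * t, q + 1)
  | enter {t q x : ℕ} : InEdge (σ t) q x → Edge σ G (2 * t, q) (2 * t + 1, x)
  | rung {t x : ℕ} : IsRung (σ t) x → Edge σ G (2 * t + 1, x) (2 * t + 1, x + 1)
  | exit {t x q : ℕ} : x / 2 = q → Edge σ G (2 * t + 1, x) (2 * t + 2, q)

def graph (σ : ℕ → ℕ) (G : SimpleGraph ℕ) : SimpleGraph (ℕ × ℕ) := SimpleGraph.fromRel (Edge σ G)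

variable {σ : ℕ → ℕ} {G : SimpleGraph ℕ}

namespace Edge

variable {v w : ℕ × ℕ}

lemma fst_le (h : Edge σ G v w) : v.1 ≤ w.1 ∧ w.1 ≤ v.1 + 1 := by
  cases h <;> simp only <;> omega

lemma snd_eq_of_fst_eq (h : Edge σ G v w) (hvw : v.1 = w.1) : w.2 = v.2 + 1 := by
  cases h <;> simp only at hvw ⊢ <;> omega

lemma ne (h : Edge σ G v w) : v ≠ w := by
  rintro rfl
  have := h.snd_eq_of_fst_eq rfl
  omega

lemma cross {a b c d : ℕ × ℕ} (had : Edge σ G a d) (hbc : Edge σ G b c) (hab : a.1 = b.1)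
    (hca : c.1 = a.1 + 1) (hcd : c.1 = d.1) (hab' : a.2 < b.2) (hcd' : c.2 < d.2) :
    Edge σ G a c ∨ Edge σ G b d ∨ Edge σ G c d := by
  -- Same-column edges and the monotone exit edges cannot cross: only two entering edges remain.
  cases had <;> cases hbc <;> simp only at hab hca hcd hab' hcd' <;> try omega
  case enter.enter t q x hin t' q' x' hin' =>
    obtain rfl : t' = t := by omega
    rcases inEdge_cross hin hin' hab' hcd' with h | h | ⟨rfl, h⟩
    · exact Or.inl (enter h)
    · exact Or.inr (Or.inl (enter h))
    · exact Or.inr (Or.inr (rung h))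

end Edge

lemma graph_adj_of_edge {v w : ℕ × ℕ} (h : Edge σ G v w) : (graph σ G).Adj v w :=
  (SimpleGraph.fromRel_adj _ _ _).2 ⟨h.ne, Or.inl h⟩

lemma edge_of_graph_adj {v w : ℕ × ℕ} (h : (graph σ G).Adj v w) (hvw : v.1 < w.1) :
    Edge σ G v w := by
  rcases ((SimpleGraph.fromRel_adj _ _ _).1 h).2 with h | h
  · exact h
  · have := h.fst_le; omega

lemma graph_adj_fst_le {v w : ℕ × ℕ} (h : (graph σ G).Adj v w) : w.1 ≤ v.1 + 1 := by
  rcases ((SimpleGraph.fromRel_adj _ _ _).1 h).2 with h | h <;> have := h.fst_le <;> omega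

lemma graph_adj_snd {v w : ℕ × ℕ} (h : (graph σ G).Adj v w) (hvw : v.1 = w.1) :
    w.2 = v.2 + 1 ∨ v.2 = w.2 + 1 := by
  rcases ((SimpleGraph.fromRel_adj _ _ _).1 h).2 with h | h
  · exact Or.inl (h.snd_eq_of_fst_eq hvw)
  · exact Or.inr (h.snd_eq_of_fst_eq hvw.symm)

lemma graph_adj_cross {a b c d : ℕ × ℕ} (had : (graph σ G).Adj a d) (hbc : (graph σ G).Adj b c)
    (hab : a.1 = b.1) (hca : c.1 = a.1 + 1) (hcd : d.1 = c.1) (hab' : a.2 < b.2)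
    (hcd' : c.2 < d.2) :
    (graph σ G).Adj a c ∨ (graph σ G).Adj b d ∨ (graph σ G).Adj a b ∨ (graph σ G).Adj c d := by
  rcases (edge_of_graph_adj had (by omega)).cross (edge_of_graph_adj hbc (by omega)) hab hca
    hcd.symm hab' hcd' with h | h | h
  · exact Or.inl (graph_adj_of_edge h)
  · exact Or.inr (Or.inl (graph_adj_of_edge h))
  · exact Or.inr (Or.inr (Or.inr (graph_adj_of_edge h)))

section color

variable (σ) (c : ℕ → Fin 3)

def color (v : ℕ × ℕ) : Fin 3 :=
  if v.1 % 2 = 0 then c (wireAt σ (v.1 / 2) v.2)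
  else rowColor (σ (v.1 / 2)) (fun q => c (wireAt σ (v.1 / 2) q)) v.2

lemma color_even (t q : ℕ) : color σ c (2 * t, q) = c (wireAt σ t q) := by
  simp [color]

lemma color_odd (t x : ℕ) :
    color σ c (2 * t + 1, x) = rowColor (σ t) (fun q => c (wireAt σ t q)) x := by
  rw [color, if_neg (by omega), show (2 * t + 1) / 2 = t by omega]

lemma color_ne_of_edge (hc : ∀ a b, G.Adj a b → c a ≠ c b) {v w : ℕ × ℕ} (h : Edge σ G v w) :
    color σ c v ≠ color σ c w := by
  cases h with
  | wire h => rw [color_even, color_even]; exact hc _ _ h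
  | enter h =>
    rw [color_even, color_odd]
    exact (rowColor_ne_of_inEdge (u := fun q => c (wireAt σ _ q)) h).symm
  | rung h => rw [color_odd, color_odd]; exact rowColor_ne_of_isRung h
  | exit h =>
    rw [color_odd, show 2 * _ + 2 = 2 * (_ + 1) by ring, color_even, wireAt, ← h]
    exact rowColor_ne_out _

end color

def box (T n : ℕ) : Finset (ℕ × ℕ) := Finset.range (2 * T + 1) ×ˢ Finset.range (2 * n)

lemma mem_box {T n : ℕ} {v : ℕ × ℕ} : v ∈ box T n ↔ v.1 ≤ 2 * T ∧ v.2 < 2 * n := by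
  simp [box]

lemma eq_of_two_triangles :
    ∀ a b v w : Fin 3, a ≠ b → v ≠ a → v ≠ b → w ≠ a → w ≠ b → v = w := by
  decide

section sound

variable {T n : ℕ} {g : ℕ × ℕ → Fin 3}

lemma color_succ_eq (hg : ∀ v ∈ box T n, ∀ w ∈ box T n, Edge σ G v w → g v ≠ g w)
    {t r : ℕ} (ht : t < T) (hr : r < n) :
    g (2 * t + 2, r) = g (2 * t, Equiv.swap (σ t) (σ t + 1) r) := by
  set s := Equiv.swap (σ t) (σ t + 1) r
  have hs : s ≤ r + 1 := by simp only [s, Equiv.swap_apply_def]; split_ifs <;> omega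
  have hin (x : ℕ) (hx : x / 2 = r) : Edge σ G (2 * t, s) (2 * t + 1, x) :=
    .enter (Or.inl (by rw [hx, Equiv.swap_apply_self]))
  have hg' {v w : ℕ × ℕ} (h : Edge σ G v w) (hv : v.1 ≤ 2 * T ∧ v.2 < 2 * n := by omega)
      (hw : w.1 ≤ 2 * T ∧ w.2 < 2 * n := by omega) : g v ≠ g w :=
    hg v (mem_box.2 hv) w (mem_box.2 hw) h
  -- Rows `2r, 2r + 1` form a triangle with position `s` at time `t` and one with `r` at `t + 1`.
  exact eq_of_two_triangles (g (2 * t + 1, 2 * r)) (g (2 * t + 1, 2 * r + 1)) _ _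
    (hg' (.rung (Or.inl (by omega)))) (hg' (.exit (by omega))).symm
    (hg' (.exit (by omega))).symm (hg' (hin _ (by omega))) (hg' (hin _ (by omega)))

lemma color_eq_wireAt (hσ : ∀ t, σ t + 1 < n ∨ n ≤ σ t)
    (hg : ∀ v ∈ box T n, ∀ w ∈ box T n, Edge σ G v w → g v ≠ g w)
    {t q : ℕ} (ht : t ≤ T) (hq : q < n) : g (2 * t, q) = g (0, wireAt σ t q) := by
  induction t generalizing q with
  | zero => rfl
  | succ t ih =>
    have hs : Equiv.swap (σ t) (σ t + 1) q < n := by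
      rw [Equiv.swap_apply_def]; rcases hσ t with h | h <;> split_ifs <;> omega
    rw [Nat.mul_succ, color_succ_eq hg (by omega) hq, ih (by omega) hs]
    rfl

lemma color_ne_of_wire_adj (hσ : ∀ t, σ t + 1 < n ∨ n ≤ σ t)
    (hg : ∀ v ∈ box T n, ∀ w ∈ box T n, Edge σ G v w → g v ≠ g w)
    {t q : ℕ} (ht : t ≤ T) (hq : q + 1 < n) (h : G.Adj (wireAt σ t q) (wireAt σ t (q + 1))) :
    g (0, wireAt σ t q) ≠ g (0, wireAt σ t (q + 1)) := by
  rw [← color_eq_wireAt hσ hg ht (by omega), ← color_eq_wireAt hσ hg ht hq]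
  exact hg _ (mem_box.2 ⟨by omega, by omega⟩) _ (mem_box.2 ⟨by omega, by omega⟩) (.wire h)

end sound

/-- At time `b * n + s` with `s < b < n` wire `b` swaps with its left neighbour; the value `n`
means no transposition, as `Equiv.swap n (n + 1)` fixes every position below `n`. -/
def bubbleSchedule (n t : ℕ) : ℕ :=
  if t % n < t / n ∧ t / n < n then t / n - 1 - t % n else n

lemma bubbleSchedule_valid (n t : ℕ) : bubbleSchedule n t + 1 < n ∨ n ≤ bubbleSchedule n t := by
  unfold bubbleSchedule; split_ifs <;> omega

lemma bubbleSchedule_block {n b s : ℕ} (hs : s < n) :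
    bubbleSchedule n (b * n + s) = if s < b ∧ b < n then b - 1 - s else n := by
  obtain ⟨h₁, h₂⟩ := div_mod_of_add_mul (i := b) hs
  rw [bubbleSchedule, add_comm, mul_comm, h₁, h₂]

/-- The wire at position `q` after `s ≤ b` steps of block `b`: wires `b - 1, …, 0` stand in this
order and wire `b` has moved `s` places to the left. -/
def bubbleWire (b s q : ℕ) : ℕ :=
  if q < b - s then b - 1 - q else if q = b - s then b else if q ≤ b then b - q else q

lemma bubbleWire_swap {b s : ℕ} (q : ℕ) (h : s < b) :
    bubbleWire b s (Equiv.swap (b - 1 - s) (b - 1 - s + 1) q) = bubbleWire b (s + 1) q := by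
  unfold bubbleWire; rw [Equiv.swap_apply_def]; split_ifs <;> omega

lemma wireAt_bubble_block {n b : ℕ} (hb : b < n)
    (h₀ : ∀ q < n, wireAt (bubbleSchedule n) (b * n) q = bubbleWire b 0 q) :
    ∀ s ≤ n, ∀ q < n, wireAt (bubbleSchedule n) (b * n + s) q = bubbleWire b (min s b) q := by
  intro s
  induction s with
  | zero => simpa using h₀
  | succ s ih =>
    intro hs q hq
    rw [← add_assoc, wireAt, bubbleSchedule_block (by omega)]
    split_ifs with h
    · have hq' : Equiv.swap (b - 1 - s) (b - 1 - s + 1) q < n := by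
        rw [Equiv.swap_apply_def]; split_ifs <;> omega
      rw [ih (by omega) _ hq', min_eq_left h.1.le, min_eq_left h.1, bubbleWire_swap q h.1]
    · rw [Equiv.swap_apply_of_ne_of_ne (by omega) (by omega), ih (by omega) q hq]
      congr 1
      omega

lemma wireAt_bubble {n b : ℕ} (hb : b < n) :
    ∀ q < n, wireAt (bubbleSchedule n) (b * n) q = bubbleWire b 0 q := by
  induction b with
  | zero => intro q _; simp only [zero_mul, wireAt, bubbleWire]; split_ifs <;> omega
  | succ b ih =>
    intro q hq
    rw [Nat.succ_mul, wireAt_bubble_block (by omega) (ih (by omega)) n le_rfl q hq,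
      min_eq_right (by omega)]
    unfold bubbleWire; split_ifs <;> omega

lemma wireAt_bubble_meet {n a b : ℕ} (hab : a < b) (hb : b < n) :
    wireAt (bubbleSchedule n) (b * n + a) (b - a - 1) = a ∧
      wireAt (bubbleSchedule n) (b * n + a) (b - a - 1 + 1) = b := by
  rw [wireAt_bubble_block hb (wireAt_bubble hb) a (by omega) _ (by omega),
    wireAt_bubble_block hb (wireAt_bubble hb) a (by omega) _ (by omega), min_eq_left hab.le]
  unfold bubbleWire; constructor <;> split_ifs <;> omega

section realization

variable (n : ℕ) (K : SimpleGraph ℕ)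

def realization : SimpleGraph (box (n * n) n) := (graph (bubbleSchedule n) K).comap Subtype.val

def order (v : box (n * n) n) : ℝ := ((v.1.2 + 2 * n * v.1.1 : ℕ) : ℝ)

def input {n a : ℕ} (ha : a < n) : box (n * n) n := ⟨(0, a), mem_box.2 ⟨by omega, by omega⟩⟩

lemma order_lt {v w : box (n * n) n} (h : order n v < order n w) :
    v.1.1 < w.1.1 ∨ v.1.1 = w.1.1 ∧ v.1.2 < w.1.2 :=
  lex_lt_of_add_mul_lt (mem_box.1 v.2).2 (mem_box.1 w.2).2 (Nat.cast_lt.1 h)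

lemma order_injective : Function.Injective (order n) := by
  intro v w h
  obtain ⟨h₁, h₂⟩ := eq_of_add_mul_eq (mem_box.1 v.2).2 (mem_box.1 w.2).2 (Nat.cast_injective h)
  exact Subtype.ext (Prod.ext h₁ h₂)

lemma input_injective {a b : ℕ} (ha : a < n) (hb : b < n) (h : input ha = input hb) : a = b :=
  congrArg (fun v : box (n * n) n => v.1.2) h

theorem patternFree_realization : PatternFree (realization n K) (order n) M4 :=
  patternFree_M4_of_layers _ _ (fun v => v.1.1) (fun v => v.1.2) (fun _ _ => order_lt n)
    (fun _ _ => graph_adj_fst_le) (fun _ _ => graph_adj_snd)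
    (fun _ _ _ _ had hbc hab hca hcd => graph_adj_cross had hbc hab hca hcd)

variable {n K}

theorem realization_input_ne {f : box (n * n) n → Fin 3}
    (hf : ∀ x y, (realization n K).Adj x y → f x ≠ f y) {a b : ℕ} (ha : a < n) (hb : b < n)
    (h : K.Adj a b) : f (input ha) ≠ f (input hb) := by
  let g := Function.extend Subtype.val f 0
  have hgf (v : box (n * n) n) : g v = f v := Subtype.val_injective.extend_apply f 0 v
  have hg : ∀ v ∈ box (n * n) n, ∀ w ∈ box (n * n) n, Edge (bubbleSchedule n) K v w → g v ≠ g w :=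
    fun v hv w hw h => hgf ⟨v, hv⟩ ▸ hgf ⟨w, hw⟩ ▸ hf ⟨v, hv⟩ ⟨w, hw⟩ (graph_adj_of_edge h)
  suffices ∀ {a b : ℕ}, a < b → b < n → K.Adj a b → g (0, a) ≠ g (0, b) by
    rw [← hgf, ← hgf]
    rcases (h.ne : a ≠ b).lt_or_gt with hab | hab
    · exact this hab hb h
    · exact (this hab ha h.symm).symm
  intro a b hab hb h
  obtain ⟨h₁, h₂⟩ := wireAt_bubble_meet hab hb
  have ht : b * n + a ≤ n * n := by nlinarith
  have := color_ne_of_wire_adj (bubbleSchedule_valid n) hg ht (q := b - a - 1) (by omega)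
    (by rwa [h₁, h₂])
  rwa [h₁, h₂] at this

theorem exists_realization_coloring {c : ℕ → Fin 3} (hc : ∀ a b, K.Adj a b → c a ≠ c b) :
    ∃ f : box (n * n) n → Fin 3, (∀ x y, (realization n K).Adj x y → f x ≠ f y) ∧
      ∀ {a : ℕ} (ha : a < n), f (input ha) = c a := by
  refine ⟨fun v => color (bubbleSchedule n) c v.1, fun x y hxy => ?_, fun _ => color_even _ c 0 _⟩
  rcases ((SimpleGraph.fromRel_adj _ _ _).1 hxy).2 with h | h
  · exact color_ne_of_edge _ c hc h
  · exact (color_ne_of_edge _ c hc h).symm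

end realization

end SwapGadget

open SwapGadget in
/-- For every graph `G` there is a realization `(H, L)` of `G` (witnessed by the
injection `ι` of the vertices of `G` into those of `H`) together with an injective
ordering `τ` such that `(H, τ)` is `M_4`-free. -/
theorem realization_M4_free
    {VG : Type*} [Fintype VG] (G : SimpleGraph VG) :
    ∃ (W : Type) (_ : Fintype W) (H : SimpleGraph W) (ι : VG → W) (τ : W → ℝ)
      (L : W → Finset (Fin 3)),
      Function.Injective ι ∧ Function.Injective τ ∧
      (∀ u : VG, L (ι u) = (Finset.univ : Finset (Fin 3))) ∧
      (∀ f : W → Fin 3, (∀ x y, H.Adj x y → f x ≠ f y) → (∀ x, f x ∈ L x) →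
        ∀ u v : VG, G.Adj u v → f (ι u) ≠ f (ι v)) ∧
      (∀ g : VG → Fin 3, (∀ u v, G.Adj u v → g u ≠ g v) →
        ∃ f : W → Fin 3, (∀ x y, H.Adj x y → f x ≠ f y) ∧ (∀ x, f x ∈ L x) ∧
          ∀ u : VG, f (ι u) = g u) ∧
      PatternFree H τ M4 := by
  classical
  set n := Fintype.card VG
  let e : VG ↪ ℕ := (Fintype.equivFin VG).toEmbedding.trans Fin.valEmbedding
  have he (u : VG) : e u < n := (Fintype.equivFin VG u).isLt
  refine ⟨box (n * n) n, inferInstance, realization n (G.map e), fun u => input (he u), order n,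
    fun _ => Finset.univ, fun u v h => e.injective (input_injective n (he u) (he v) h),
    order_injective n, fun _ => rfl, ?_, ?_, patternFree_realization n _⟩
  · intro f hf _ u v huv
    exact realization_input_ne hf (he u) (he v) (SimpleGraph.map_adj_apply.2 huv)
  · intro g hg
    have hc (u : VG) : Function.extend e g 0 (e u) = g u := e.injective.extend_apply g 0 u
    obtain ⟨f, hf, hfc⟩ := exists_realization_coloring (n := n) (c := Function.extend e g 0) <| by
      intro a b hab
      obtain ⟨u, v, huv, rfl, rfl⟩ := (SimpleGraph.map_adj _ _ _ _).1 hab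
      rw [hc, hc]
      exact hg u v huv
    exact ⟨f, hf, fun _ => Finset.mem_univ _, fun u => (hfc (he u)).trans (hc u)⟩
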